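/- arXiv:1110.5030 — 2 statements merged into one kernel-verified Lean document; each statement's English description precedes it below -/
import Mathlib

section
/- Let p ≥ 1, let σ₁ ≥ σ₂ ≥ … ≥ σ_{2p} be real numbers, and let S₀ be a real symmetric 2p×2p matrix with ordered spectrum (σ₁, …, σ_{2p}). Let a and b be real symmetric p×p matrices with ordered spectra σ₋ = (σ₁, σ₃, …, σ_{2p−1}) and σ₊ = (σ₂, σ₄, …, σ_{2p}) respectively, and let (ν₁, …, ν_p) be the ordered spectrum of a + b. Then there exists a hermitian structure J on ℝ^{2p} (JᵀJ = I, J² = −I) such that the characteristic polynomial of S₀ + J⁻¹S₀J equals ∏_{i=1}^{p} (X − ν_i)², i.e. the ordered spectrum of S₀ + J⁻¹S₀J is the doubled list (ν₁, ν₁, …, ν_p, ν_p). (This is the inclusion 𝒫₁ ⊂ Im ℱ.) -/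
/-!
Since `σ` is the union of `σ₋` and `σ₊`, the block matrix `S = diag(a, b)` has the same spectrum
as `S₀`, hence `S₀ = Q S Qᵀ` for an orthogonal `Q`. The standard hermitian structure
`J₀ = [[0, -1], [1, 0]]` swaps the blocks, `J₀⁻¹ S J₀ = diag(b, a)`, so
`S + J₀⁻¹ S J₀ = diag(a + b, a + b)`, whose spectrum is `ν` doubled. Orthogonal conjugation
preserves hermitian structures and commutes with `S ↦ S + J⁻¹ S J`, so `J = Q J₀ Qᵀ` works.
-/

open Matrix

def finSumFinInterleave (p : ℕ) : Fin p ⊕ Fin p ≃ Fin (2 * p) where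
  toFun := Sum.elim (fun i => ⟨2 * i, by omega⟩) (fun i => ⟨2 * i + 1, by omega⟩)
  invFun j := if j.val % 2 = 0 then .inl ⟨j / 2, by omega⟩ else .inr ⟨j / 2, by omega⟩
  left_inv := by rintro (i | i) <;> simp [Fin.ext_iff]; omega
  right_inv j := by
    by_cases h : j.val % 2 = 0 <;> simp [h, Fin.ext_iff] <;> omega

theorem prod_finSumFinInterleave {M : Type*} [CommMonoid M] {p : ℕ} (f : Fin (2 * p) → M) :
    ∏ i, f i = (∏ i : Fin p, f ⟨2 * i, by omega⟩) * ∏ i : Fin p, f ⟨2 * i + 1, by omega⟩ := by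
  rw [← (finSumFinInterleave p).prod_comp, Fintype.prod_sum_type]
  rfl

section HermitianStructure

variable {n m R : Type*} [Fintype n] [DecidableEq n] [Fintype m] [DecidableEq m] [CommRing R]

def IsHermitianStructure (J : Matrix n n R) : Prop :=
  Jᵀ * J = 1 ∧ J * J = -1

theorem IsHermitianStructure.inv_eq_neg {J : Matrix n n R} (hJ : IsHermitianStructure J) :
    J⁻¹ = -J :=
  inv_eq_left_inv (by rw [neg_mul, hJ.2, neg_neg])

theorem isHermitianStructure_fromBlocks :
    IsHermitianStructure (fromBlocks 0 (-1) 1 0 : Matrix (m ⊕ m) (m ⊕ m) R) := by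
  constructor <;> simp [fromBlocks_transpose, fromBlocks_multiply, ← fromBlocks_one, fromBlocks_neg]

theorem IsHermitianStructure.reindex {J : Matrix m m R} (hJ : IsHermitianStructure J) (e : m ≃ n) :
    IsHermitianStructure (reindex e e J) := by
  constructor
  · rw [transpose_reindex, ← coe_reindexRingEquiv, ← map_mul, hJ.1, map_one]
  · rw [← coe_reindexRingEquiv, ← map_mul, hJ.2, map_neg, map_one]

theorem IsHermitianStructure.conj {J Q : Matrix n n R} (hJ : IsHermitianStructure J)
    (hQ : Q * Qᵀ = 1) : IsHermitianStructure (Q * J * Qᵀ) := by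
  have hQ' : Qᵀ * Q = 1 := mul_eq_one_comm.mp hQ
  constructor
  · simp only [transpose_mul, transpose_transpose, Matrix.mul_assoc]
    rw [← Matrix.mul_assoc Qᵀ Q, hQ', Matrix.one_mul, ← Matrix.mul_assoc Jᵀ, hJ.1,
      Matrix.one_mul, hQ]
  · simp only [Matrix.mul_assoc]
    rw [← Matrix.mul_assoc Qᵀ Q, hQ', Matrix.one_mul, ← Matrix.mul_assoc J J, hJ.2, Matrix.neg_mul,
      Matrix.one_mul, Matrix.mul_neg, hQ]

theorem charpoly_mul_mul_transpose {Q : Matrix n n R} (hQ : Q * Qᵀ = 1) (A : Matrix n n R) :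
    (Q * A * Qᵀ).charpoly = A.charpoly := by
  rw [charpoly_mul_comm, ← Matrix.mul_assoc, mul_eq_one_comm.mp hQ, Matrix.one_mul]

theorem add_inv_mul_mul_reindex (e : m ≃ n) (S J : Matrix m m R) :
    reindex e e S + (reindex e e J)⁻¹ * reindex e e S * reindex e e J =
      reindex e e (S + J⁻¹ * S * J) := by
  rw [inv_reindex]
  simp only [← coe_reindexRingEquiv, map_add, map_mul]

theorem add_inv_mul_mul_conj {Q : Matrix n n R} (hQ : Q * Qᵀ = 1) (S J : Matrix n n R) :
    Q * S * Qᵀ + (Q * J * Qᵀ)⁻¹ * (Q * S * Qᵀ) * (Q * J * Qᵀ) = Q * (S + J⁻¹ * S * J) * Qᵀ := by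
  have hQ' : Qᵀ * Q = 1 := mul_eq_one_comm.mp hQ
  have hinv : (Q * J * Qᵀ)⁻¹ = Q * J⁻¹ * Qᵀ := by
    rw [Matrix.mul_inv_rev, Matrix.mul_inv_rev, inv_eq_left_inv hQ, inv_eq_left_inv hQ',
      Matrix.mul_assoc]
  rw [hinv]
  simp only [Matrix.mul_add, Matrix.add_mul, Matrix.mul_assoc]
  rw [← Matrix.mul_assoc Qᵀ Q, hQ', Matrix.one_mul, ← Matrix.mul_assoc Qᵀ Q, hQ', Matrix.one_mul]

theorem fromBlocks_add_inv_mul_mul (a b : Matrix m m R) :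
    fromBlocks a 0 0 b + (fromBlocks 0 (-1) 1 0)⁻¹ * fromBlocks a 0 0 b * fromBlocks 0 (-1) 1 0 =
      fromBlocks (a + b) 0 0 (a + b) := by
  rw [isHermitianStructure_fromBlocks.inv_eq_neg]
  simp [fromBlocks_neg, fromBlocks_multiply, fromBlocks_add, add_comm]

end HermitianStructure

theorem Matrix.IsHermitian.exists_unitary_conj_eq_of_charpoly_eq {𝕜 n : Type*} [RCLike 𝕜]
    [Fintype n] [DecidableEq n] {A B : Matrix n n 𝕜} (hA : A.IsHermitian) (hB : B.IsHermitian)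
    (h : A.charpoly = B.charpoly) :
    ∃ U : unitaryGroup n 𝕜, A = Unitary.conjStarAlgAut 𝕜 _ U B := by
  refine ⟨hA.eigenvectorUnitary * star hB.eigenvectorUnitary, ?_⟩
  rw [Unitary.conjStarAlgAut_mul_apply, hB.conjStarAlgAut_star_eigenvectorUnitary,
    ← (hA.eigenvalues_eq_eigenvalues_iff hB).mpr h, ← hA.spectral_theorem]

theorem Matrix.IsSymm.exists_orthogonal_conj_eq_of_charpoly_eq {n : Type*} [Fintype n]
    [DecidableEq n] {A B : Matrix n n ℝ} (hA : A.IsSymm) (hB : B.IsSymm)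
    (h : A.charpoly = B.charpoly) :
    ∃ Q : Matrix n n ℝ, Q * Qᵀ = 1 ∧ A = Q * B * Qᵀ := by
  obtain ⟨U, hU⟩ := (isHermitian_iff_isSymm.mpr hA).exists_unitary_conj_eq_of_charpoly_eq
    (isHermitian_iff_isSymm.mpr hB) h
  have hstar : star (U : Matrix n n ℝ) = (U : Matrix n n ℝ)ᵀ := by
    rw [star_eq_conjTranspose, conjTranspose_eq_transpose_of_trivial]
  exact ⟨U, hstar ▸ Unitary.coe_mul_star_self U, hstar ▸ hU⟩

/-- the inclusion `𝒫₁ ⊆ Im ℱ`. Let `S₀` be a real symmetric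
`2p × 2p` matrix with ordered spectrum `σ₁ ≥ ⋯ ≥ σ_{2p}`, and let `a`, `b` be real
symmetric `p × p` matrices with ordered spectra `σ₋ = (σ₁, σ₃, …, σ_{2p-1})` and
`σ₊ = (σ₂, σ₄, …, σ_{2p})` respectively.  If `(ν₁ ≥ ⋯ ≥ ν_p)` is the ordered spectrum
of `a + b`, then there is a hermitian structure `J` on `ℝ^{2p}` such that the ordered
spectrum of `S₀ + J⁻¹ S₀ J` is the doubled list `(ν₁, ν₁, …, ν_p, ν_p)`, i.e.
its characteristic polynomial is `∏ (X - νᵢ)²`. -/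
theorem P1_subset_image_frequency_map
    (p : ℕ)
    (σ : Fin (2 * p) → ℝ)
    (S₀ : Matrix (Fin (2 * p)) (Fin (2 * p)) ℝ) (hS₀ : S₀.IsSymm)
    (hS₀spec : S₀.charpoly = ∏ i : Fin (2 * p), (Polynomial.X - Polynomial.C (σ i)))
    (a b : Matrix (Fin p) (Fin p) ℝ) (ha : a.IsSymm) (hb : b.IsSymm)
    (haspec : a.charpoly =
      ∏ i : Fin p, (Polynomial.X - Polynomial.C (σ ⟨2 * i.val, by have := i.isLt; omega⟩)))
    (hbspec : b.charpoly =
      ∏ i : Fin p, (Polynomial.X - Polynomial.C (σ ⟨2 * i.val + 1, by have := i.isLt; omega⟩)))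
    (ν : Fin p → ℝ)
    (hνspec : (a + b).charpoly = ∏ i : Fin p, (Polynomial.X - Polynomial.C (ν i))) :
    ∃ J : Matrix (Fin (2 * p)) (Fin (2 * p)) ℝ,
      Jᵀ * J = 1 ∧ J * J = -1 ∧
      (S₀ + J⁻¹ * S₀ * J).charpoly =
        ∏ i : Fin p, (Polynomial.X - Polynomial.C (ν i)) ^ 2 := by
  set e := finSumFinInterleave p
  set S := reindex e e (fromBlocks a 0 0 b)
  have hS : S.IsSymm := (ha.fromBlocks (by simp) hb).reindex e
  have hcharpoly : S₀.charpoly = S.charpoly := by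
    rw [charpoly_reindex, charpoly_fromBlocks_zero₁₂, hS₀spec, haspec, hbspec,
      prod_finSumFinInterleave]
  obtain ⟨Q, hQ, rfl⟩ := hS₀.exists_orthogonal_conj_eq_of_charpoly_eq hS hcharpoly
  obtain ⟨hJ₁, hJ₂⟩ := (isHermitianStructure_fromBlocks.reindex e).conj hQ
  refine ⟨Q * reindex e e (fromBlocks 0 (-1) 1 0) * Qᵀ, hJ₁, hJ₂, ?_⟩
  rw [add_inv_mul_mul_conj hQ, charpoly_mul_mul_transpose hQ, add_inv_mul_mul_reindex,
    charpoly_reindex, fromBlocks_add_inv_mul_mul, charpoly_fromBlocks_zero₁₂, hνspec,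
    ← Finset.prod_mul_distrib]
  simp only [sq]
end

section
/- Let p ≥ 1, let S₀ be a real symmetric 2p×2p matrix with ordered spectrum σ = (σ₁, …, σ_{2p}), and let J be a hermitian structure on ℝ^{2p} (JᵀJ = I, J² = −I). Then there exist real numbers ν₁ ≥ … ≥ ν_p such that the ordered spectrum of S₀ + J⁻¹S₀J is the doubled list (ν₁, ν₁, …, ν_p, ν_p), and this doubled list is the ordered spectrum of a sum A + B of two real symmetric 2p×2p matrices A and B each having ordered spectrum σ. (This is the inclusion Im ℱ ⊂ 𝒫₂.) -/
/-!
Since `J⁻¹ = -J`, the matrix `S = S₀ + J⁻¹ S₀ J = S₀ - J S₀ J` commutes with `J`. Hence `J`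
preserves every generalized eigenspace of `S` and squares to `-1` there; over an ordered field
this forces the eigenspace to have even dimension, because `(det J)² = (-1)^dim`. So every root
of the characteristic polynomial of the symmetric matrix `S` has even multiplicity, and that
polynomial is `∏ (X - νᵢ)²`, where `ν` lists each root with half its multiplicity, in
decreasing order. The witnesses for `𝒫₂` are `A = S₀` and `B = J⁻¹ S₀ J = Jᵀ S₀ J`, which is
symmetric and similar to `S₀`.
-/

open Matrix Polynomial

namespace Multiset

theorem exists_eq_add_self_of_even_count {α : Type*} [DecidableEq α] (m : Multiset α)
    (h : ∀ a, Even (m.count a)) : ∃ m', m = m' + m' := by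
  refine ⟨∑ a ∈ m.toFinset, (m.count a / 2) • {a}, ?_⟩
  conv_lhs => rw [← toFinset_sum_count_nsmul_eq m]
  rw [← Finset.sum_add_distrib]
  refine Finset.sum_congr rfl fun a _ => ?_
  rw [← add_nsmul]
  obtain ⟨k, hk⟩ := h a
  congr 1
  omega

theorem exists_antitone_map_univ_eq {α : Type*} [LinearOrder α] {p : ℕ} (m : Multiset α)
    (hm : card m = p) : ∃ ν : Fin p → α, Antitone ν ∧ Finset.univ.val.map ν = m := by
  subst hm
  set l := m.sort (· ≥ ·)
  have hl : l.length = card m := length_sort ..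
  refine ⟨l.get ∘ Fin.cast hl.symm, ?_, ?_⟩
  · exact (pairwise_sort m _).sortedGE.antitone_get.comp_monotone fun _ _ h => h
  · rw [Fin.univ_val_map, Function.comp_def, ← List.ofFn_congr hl, List.ofFn_get, sort_eq]

end Multiset

namespace Polynomial

theorem exists_antitone_prod_X_sub_C_eq_sq {K ι : Type*} [CommRing K] [IsDomain K]
    [LinearOrder K] [Fintype ι] {p : ℕ} (μ : ι → K) (hcard : Fintype.card ι = 2 * p)
    (heven : ∀ a, Even ((∏ i, (X - C (μ i))).rootMultiplicity a)) :
    ∃ ν : Fin p → K, Antitone ν ∧ ∏ i, (X - C (μ i)) = ∏ i, (X - C (ν i)) ^ 2 := by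
  classical
  set R := Finset.univ.val.map μ
  have hR : ∏ i, (X - C (μ i)) = (R.map fun a => X - C a).prod := by
    rw [Finset.prod_eq_multiset_prod, Multiset.map_map]; rfl
  obtain ⟨m, hm⟩ := R.exists_eq_add_self_of_even_count fun a => by
    have := heven a
    rwa [hR, ← count_roots, roots_multiset_prod_X_sub_C] at this
  obtain ⟨ν, hν, hνm⟩ := m.exists_antitone_map_univ_eq (p := p) (by
    have : Multiset.card R = 2 * p := by simp [R, hcard]
    rw [hm, Multiset.card_add] at this
    omega)
  refine ⟨ν, hν, ?_⟩
  have hνprod : ∏ i, (X - C (ν i)) = (m.map fun a => X - C a).prod := by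
    rw [← hνm, Multiset.map_map, Finset.prod_eq_multiset_prod]; rfl
  rw [hR, hm, Finset.prod_pow, hνprod, Multiset.map_add, Multiset.prod_add, sq]

end Polynomial

namespace Module.End

variable {K V : Type*} [Field K] [LinearOrder K] [IsStrictOrderedRing K]
  [AddCommGroup V] [Module K V] [FiniteDimensional K V]

theorem even_finrank_of_mul_self_eq_neg_one {j : End K V} (hj : j * j = -1) :
    Even (Module.finrank K V) := by
  by_contra hodd
  have hdet : LinearMap.det j * LinearMap.det j = -1 := by
    rw [← map_mul, hj, ← neg_one_smul K (1 : End K V), LinearMap.det_smul, map_one, mul_one,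
      (Nat.not_even_iff_odd.mp hodd).neg_one_pow]
  nlinarith [mul_self_nonneg (LinearMap.det j)]

theorem even_rootMultiplicity_charpoly_of_commute {φ j : End K V} (hj : j * j = -1)
    (hφj : Commute φ j) (μ : K) : Even (φ.charpoly.rootMultiplicity μ) := by
  rw [← LinearMap.finrank_maxGenEigenspace_eq]
  refine even_finrank_of_mul_self_eq_neg_one
    (j := j.restrict (mapsTo_maxGenEigenspace_of_comm hφj μ)) ?_
  ext v
  change (j * j) v = -v
  rw [hj, LinearMap.neg_apply, one_apply]

end Module.End

theorem commute_sub_mul_mul_of_mul_self_eq_neg_one {R : Type*} [Ring R] {j : R}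
    (hj : j * j = -1) (a : R) : Commute (a - j * a * j) j := by
  show (a - j * a * j) * j = j * (a - j * a * j)
  rw [sub_mul, mul_sub, mul_assoc (j * a), hj, ← mul_assoc j, ← mul_assoc j, hj]
  noncomm_ring

namespace Matrix

variable {n α : Type*} [Fintype n]

theorem IsSymm.transpose_mul_mul [CommSemiring α] {A : Matrix n n α} (hA : A.IsSymm)
    (B : Matrix n n α) : (Bᵀ * A * B).IsSymm := by
  simp only [IsSymm, transpose_mul, transpose_transpose, hA.eq, mul_assoc]

variable [DecidableEq n]

theorem charpoly_inv_mul_mul [CommRing α] {J : Matrix n n α} (hJ : IsUnit J.det)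
    (A : Matrix n n α) : (J⁻¹ * A * J).charpoly = A.charpoly := by
  rw [charpoly_mul_comm, ← mul_assoc, mul_nonsing_inv J hJ, one_mul]

theorem inv_eq_neg_of_mul_self_eq_neg_one [CommRing α] {J : Matrix n n α} (hJ : J * J = -1) :
    J⁻¹ = -J :=
  inv_eq_right_inv (by rw [mul_neg, hJ, neg_neg])

theorem even_rootMultiplicity_charpoly_of_commute [Field α] [LinearOrder α]
    [IsStrictOrderedRing α] {S J : Matrix n n α} (hJ : J * J = -1) (hSJ : Commute S J) (μ : α) :
    Even (S.charpoly.rootMultiplicity μ) := by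
  rw [← charpoly_toLin']
  exact Module.End.even_rootMultiplicity_charpoly_of_commute (j := toLinAlgEquiv' J)
    (by rw [← map_mul, hJ, map_neg, map_one]) (hSJ.map toLinAlgEquiv') μ

end Matrix

theorem image_frequency_map_subset_P2_general
    (p : ℕ)
    (σ : Fin (2 * p) → ℝ)
    (S₀ : Matrix (Fin (2 * p)) (Fin (2 * p)) ℝ) (hS₀ : S₀.IsSymm)
    (hS₀spec : S₀.charpoly = ∏ i : Fin (2 * p), (Polynomial.X - Polynomial.C (σ i)))
    (J : Matrix (Fin (2 * p)) (Fin (2 * p)) ℝ)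
    (hJorth : Jᵀ * J = 1) (hJsq : J * J = -1) :
    ∃ ν : Fin p → ℝ, Antitone ν ∧
      (S₀ + J⁻¹ * S₀ * J).charpoly =
        ∏ i : Fin p, (Polynomial.X - Polynomial.C (ν i)) ^ 2 ∧
      ∃ A B : Matrix (Fin (2 * p)) (Fin (2 * p)) ℝ,
        A.IsSymm ∧ B.IsSymm ∧
        A.charpoly = ∏ i : Fin (2 * p), (Polynomial.X - Polynomial.C (σ i)) ∧
        B.charpoly = ∏ i : Fin (2 * p), (Polynomial.X - Polynomial.C (σ i)) ∧
        (A + B).charpoly = ∏ i : Fin p, (Polynomial.X - Polynomial.C (ν i)) ^ 2 := by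
  have hconj_symm : (J⁻¹ * S₀ * J).IsSymm := by
    rw [inv_eq_left_inv hJorth]; exact hS₀.transpose_mul_mul J
  have hconj_spec : (J⁻¹ * S₀ * J).charpoly = ∏ i, (X - C (σ i)) :=
    (charpoly_inv_mul_mul (isUnit_det_of_left_inverse hJorth) S₀).trans hS₀spec
  set S := S₀ + J⁻¹ * S₀ * J
  have hS : S.IsHermitian := isHermitian_iff_isSymm.mpr (hS₀.add hconj_symm)
  have hSJ : Commute S J := by
    simpa only [S, inv_eq_neg_of_mul_self_eq_neg_one hJsq, neg_mul, ← sub_eq_add_neg]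
      using commute_sub_mul_mul_of_mul_self_eq_neg_one hJsq S₀
  obtain ⟨ν, hν, hSν⟩ := exists_antitone_prod_X_sub_C_eq_sq hS.eigenvalues
    (Fintype.card_fin _) fun μ => by
      simpa [hS.charpoly_eq] using even_rootMultiplicity_charpoly_of_commute hJsq hSJ μ
  have hSspec : S.charpoly = ∏ i, (X - C (ν i)) ^ 2 := by simpa [hS.charpoly_eq] using hSν
  exact ⟨ν, hν, hSspec, S₀, J⁻¹ * S₀ * J, hS₀, hconj_symm, hS₀spec, hconj_spec, hSspec⟩

/-- the inclusion `Im ℱ ⊆ 𝒫₂`. Let `S₀` be a real symmetric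
`2p × 2p` matrix with ordered spectrum `σ = (σ₁ ≥ ⋯ ≥ σ_{2p})` and let `J` be a
hermitian structure on `ℝ^{2p}`.  Then the ordered spectrum of `S₀ + J⁻¹ S₀ J` is a
doubled list `(ν₁, ν₁, …, ν_p, ν_p)` with `ν₁ ≥ ⋯ ≥ ν_p`, and this doubled list is
the ordered spectrum of a sum `A + B` of two real symmetric `2p × 2p` matrices each
having ordered spectrum `σ`. -/
theorem image_frequency_map_subset_P2
    (p : ℕ) (hp : 1 ≤ p)
    (σ : Fin (2 * p) → ℝ) (hσ : Antitone σ)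
    (S₀ : Matrix (Fin (2 * p)) (Fin (2 * p)) ℝ) (hS₀ : S₀.IsSymm)
    (hS₀spec : S₀.charpoly = ∏ i : Fin (2 * p), (Polynomial.X - Polynomial.C (σ i)))
    (J : Matrix (Fin (2 * p)) (Fin (2 * p)) ℝ)
    (hJorth : Jᵀ * J = 1) (hJsq : J * J = -1) :
    ∃ ν : Fin p → ℝ, Antitone ν ∧
      (S₀ + J⁻¹ * S₀ * J).charpoly =
        ∏ i : Fin p, (Polynomial.X - Polynomial.C (ν i)) ^ 2 ∧
      ∃ A B : Matrix (Fin (2 * p)) (Fin (2 * p)) ℝ,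
        A.IsSymm ∧ B.IsSymm ∧
        A.charpoly = ∏ i : Fin (2 * p), (Polynomial.X - Polynomial.C (σ i)) ∧
        B.charpoly = ∏ i : Fin (2 * p), (Polynomial.X - Polynomial.C (σ i)) ∧
        (A + B).charpoly = ∏ i : Fin p, (Polynomial.X - Polynomial.C (ν i)) ^ 2 :=
  image_frequency_map_subset_P2_general p σ S₀ hS₀ hS₀spec J hJorth hJsq
end
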